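/- arXiv:math/9201238 — 8 statements merged into one kernel-verified Lean document; each statement's English description precedes it below -/
import Mathlib

section
/- For any endomorphism h of a Boolean algebra B, the set Ex Ker(h) = {x₁ ∪ x₂ : h(x₁) = 0 and h(y) = y for every y ≤ x₂} is an ideal of B. -/
/-!
`Ex Ker(h)` is the join, in the lattice of order ideals, of the kernel of `h` and of the ideal of
elements below which `h` is the identity: in a distributive lattice the join of two ideals
consists exactly of the elements `i ⊔ j`.
-/

variable {B : Type*} [BooleanAlgebra B]

/-- `Ex Ker(h) = {x₁ ⊔ x₂ : h x₁ = ⊥ and h y = y for all y ≤ x₂}`. -/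
def exKer (h : B → B) : Set B :=
  {z | ∃ x₁ x₂ : B, z = x₁ ⊔ x₂ ∧ h x₁ = ⊥ ∧ ∀ y ≤ x₂, h y = y}

namespace SupBotHom

open Order

def kerIdeal {α β : Type*} [SemilatticeSup α] [OrderBot α] [SemilatticeSup β] [OrderBot β]
    (f : SupBotHom α β) : Ideal α where
  carrier := {x | f x = ⊥}
  lower' _ _ hyx hx := le_bot_iff.mp (hx ▸ OrderHomClass.mono f hyx)
  nonempty' := ⟨⊥, map_bot f⟩
  directed' := SupClosed.directedOn fun x (hx : f x = ⊥) y (hy : f y = ⊥) => by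
    change f (x ⊔ y) = ⊥
    rw [map_sup, hx, hy, sup_bot_eq]

variable {α : Type*} [DistribLattice α] [OrderBot α]

lemma supClosed_fixedBelow (f : SupBotHom α α) : SupClosed {x | ∀ y ≤ x, f y = y} := by
  intro a ha b hb y hy
  have hsplit : y = y ⊓ a ⊔ y ⊓ b := by rw [← inf_sup_left, inf_eq_left.mpr hy]
  rw [hsplit, map_sup, ha _ inf_le_right, hb _ inf_le_right]

def fixedBelowIdeal (f : SupBotHom α α) : Ideal α where
  carrier := {x | ∀ y ≤ x, f y = y}
  lower' _ _ hyx hx z hz := hx z (hz.trans hyx)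
  nonempty' := ⟨⊥, fun y hy => by rw [le_bot_iff.mp hy, map_bot]⟩
  directed' := f.supClosed_fixedBelow.directedOn

end SupBotHom

theorem exKer_eq_coe_kerIdeal_sup_fixedBelowIdeal (f : SupBotHom B B) :
    exKer f = ↑(f.kerIdeal ⊔ f.fixedBelowIdeal) := by
  rw [Order.Ideal.coe_sup_eq]
  ext z
  constructor
  · rintro ⟨x₁, x₂, rfl, hx₁, hx₂⟩
    exact ⟨x₁, hx₁, x₂, hx₂, rfl⟩
  · rintro ⟨x₁, hx₁, x₂, hx₂, rfl⟩
    exact ⟨x₁, x₂, rfl, hx₁, hx₂⟩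

theorem exKer_isIdeal_general (h : B → B)
    (hsup : ∀ x y, h (x ⊔ y) = h x ⊔ h y)
    (hbot : h ⊥ = ⊥) :
    ⊥ ∈ exKer h ∧
      (∀ a b : B, b ∈ exKer h → a ≤ b → a ∈ exKer h) ∧
      (∀ a ∈ exKer h, ∀ b ∈ exKer h, a ⊔ b ∈ exKer h) := by
  let f : SupBotHom B B := ⟨⟨h, hsup⟩, hbot⟩
  have hI : exKer h = ↑(f.kerIdeal ⊔ f.fixedBelowIdeal) :=
    exKer_eq_coe_kerIdeal_sup_fixedBelowIdeal f
  rw [hI]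
  exact ⟨Order.Ideal.bot_mem _, fun a b hb hab => Order.Ideal.lower _ hab hb,
    fun a ha b hb => Order.Ideal.sup_mem ha hb⟩

/-- For any endomorphism `h` of a Boolean algebra `B`, `Ex Ker(h)` is an ideal of `B`. -/
theorem exKer_isIdeal (h : B → B)
    (hsup : ∀ x y, h (x ⊔ y) = h x ⊔ h y)
    (hinf : ∀ x y, h (x ⊓ y) = h x ⊓ h y)
    (hbot : h ⊥ = ⊥) (htop : h ⊤ = ⊤) :
    ⊥ ∈ exKer h ∧
      (∀ a b : B, b ∈ exKer h → a ≤ b → a ∈ exKer h) ∧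
      (∀ a ∈ exKer h, ∀ b ∈ exKer h, a ⊔ b ∈ exKer h) :=
  exKer_isIdeal_general h hsup hbot
end

section
/- If h is an endomorphism of a Boolean algebra B and the quotient B / Ex Ker(h) is infinite, then there exists a sequence of pairwise disjoint elements dₙ ∈ B (n < ω) such that h(dₙ) ≰ dₙ for every n. -/
variable {B : Type*} [BooleanAlgebra B]

/-!
`Ex Ker(h)` is an ideal, and `d` belongs to it as soon as `h e ≤ e` for every `e ≤ d`: then `h`
acts below `d` as `y ↦ y ⊓ h d`, which kills `d \ h d` and fixes everything below `d ⊓ h d`.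
So it suffices to find infinitely many pairwise disjoint elements outside an ideal `I` of `B`
with `B / I` infinite. Call `b` infinite below if infinitely many classes have a representative
below `b`. The class of `x` is the join of the classes of `x ⊓ c` and `x ⊓ cᶜ`, so one of
`b ⊓ c`, `b ⊓ cᶜ` is again infinite below. Taking `c ≤ b` whose class is neither that of `⊥`
nor that of `b`, this splits off from `b` a piece outside `I` and leaves a remainder that is
infinite below; iterating from `⊤` produces the sequence.
-/

open Function
open scoped symmDiff

theorem sup_symmDiff_sup_le {α : Type*} [GeneralizedCoheytingAlgebra α] (a b c d : α) :
    (a ⊔ b) ∆ (c ⊔ d) ≤ a ∆ c ⊔ b ∆ d := by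
  rw [symmDiff_le_iff]
  constructor <;> refine sup_le ?_ ?_
  · exact (le_symmDiff_sup_right a c).trans (by simp [le_sup_of_le_left, le_sup_of_le_right])
  · exact (le_symmDiff_sup_right b d).trans (by simp [le_sup_of_le_left, le_sup_of_le_right])
  · exact (le_symmDiff_sup_left a c).trans (by simp [le_sup_of_le_left, le_sup_of_le_right])
  · exact (le_symmDiff_sup_left b d).trans (by simp [le_sup_of_le_left, le_sup_of_le_right])

theorem Antitone.pairwise_disjoint_on_sdiff_succ {α : Type*} [GeneralizedBooleanAlgebra α]
    {s : ℕ → α} (hs : Antitone s) : Pairwise (Disjoint on fun n => s n \ s (n + 1)) := by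
  refine (pairwise_disjoint_on _).2 fun m n hmn => ?_
  exact disjoint_sdiff_self_left.mono_right (sdiff_le.trans (hs hmn))

namespace Order.Ideal

variable (I : Order.Ideal B)

def symmDiffSetoid : Setoid B where
  r x y := x ∆ y ∈ I
  iseqv :=
    { refl := fun x => by simp [I.bot_mem]
      symm := fun hxy => by rwa [symmDiff_comm]
      trans := fun hxy hyz => I.lower (symmDiff_triangle _ _ _) (I.sup_mem hxy hyz) }

def InfiniteBelow (b : B) : Prop :=
  (Quotient.mk I.symmDiffSetoid '' Set.Iic b).Infinite

variable {I}

theorem InfiniteBelow.inf_or_inf_compl {b : B} (hb : I.InfiniteBelow b) (c : B) :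
    I.InfiniteBelow (b ⊓ c) ∨ I.InfiniteBelow (b ⊓ cᶜ) := by
  by_contra! hfin
  simp only [InfiniteBelow, Set.not_infinite] at hfin
  let sup : Quotient I.symmDiffSetoid → Quotient I.symmDiffSetoid → Quotient I.symmDiffSetoid :=
    Quotient.map₂ (· ⊔ ·) fun _ _ hx _ _ hy =>
      I.lower (sup_symmDiff_sup_le _ _ _ _) (I.sup_mem hx hy)
  refine hb ((hfin.1.image2 sup hfin.2).subset ?_)
  rintro _ ⟨x, hx, rfl⟩
  refine ⟨_, ⟨x ⊓ c, inf_le_inf_right c hx, rfl⟩, _, ⟨x ⊓ cᶜ, inf_le_inf_right cᶜ hx, rfl⟩, ?_⟩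
  exact congrArg _ sup_inf_inf_compl

theorem InfiniteBelow.exists_le_sdiff_notMem {b : B} (hb : I.InfiniteBelow b) :
    ∃ c ≤ b, b \ c ∉ I ∧ I.InfiniteBelow c := by
  obtain ⟨_, ⟨x, hxb, rfl⟩, hx_class⟩ := (hb.sdiff (Set.toFinite {⟦⊥⟧, ⟦b⟧})).nonempty
  have hx : x ∉ I := fun hxI =>
    hx_class (Or.inl (Quotient.sound (show x ∆ ⊥ ∈ I by rwa [symmDiff_bot])))
  have hbx : b \ x ∉ I := fun hbxI =>
    hx_class (Or.inr (Quotient.sound (show x ∆ b ∈ I by rwa [symmDiff_of_le hxb])))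
  rcases hb.inf_or_inf_compl x with hinf | hinf
  · rw [inf_eq_right.2 hxb] at hinf
    exact ⟨x, hxb, hbx, hinf⟩
  · rw [← sdiff_eq] at hinf
    refine ⟨b \ x, sdiff_le, ?_, hinf⟩
    rwa [sdiff_sdiff_right_self, inf_eq_right.2 hxb]

theorem infiniteBelow_top (hI : Infinite (Quotient I.symmDiffSetoid)) : I.InfiniteBelow ⊤ := by
  simpa [InfiniteBelow, Set.image_univ, Quotient.mk_surjective.range_eq] using Set.infinite_univ

theorem exists_pairwise_disjoint_notMem (hI : Infinite (Quotient I.symmDiffSetoid)) :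
    ∃ a : ℕ → B, Pairwise (Disjoint on a) ∧ ∀ n, a n ∉ I := by
  choose next next_le next_notMem next_infinite using
    fun b : {b // I.InfiniteBelow b} => b.2.exists_le_sdiff_notMem
  let s : ℕ → {b // I.InfiniteBelow b} := fun n =>
    (fun b => ⟨next b, next_infinite b⟩)^[n] ⟨⊤, infiniteBelow_top hI⟩
  have hs : ∀ n, (s (n + 1)).1 = next (s n) := fun n => by
    simp only [s, iterate_succ_apply']
  refine ⟨fun n => (s n).1 \ (s (n + 1)).1, ?_, fun n => by simp only [hs n]; exact next_notMem _⟩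
  exact Antitone.pairwise_disjoint_on_sdiff_succ (antitone_nat_of_succ_le fun n => hs n ▸ next_le _)

end Order.Ideal

section exKer

variable {h : B → B}

theorem isLowerSet_exKer (hsup : ∀ x y, h (x ⊔ y) = h x ⊔ h y) : IsLowerSet (exKer h) := by
  rintro _ w hwz ⟨x₁, x₂, rfl, hx₁, hx₂⟩
  refine ⟨w ⊓ x₁, w ⊓ x₂, by rw [← inf_sup_left, inf_eq_left.2 hwz], ?_, ?_⟩
  · exact le_bot_iff.1 (hx₁ ▸ OrderHomClass.mono (⟨h, hsup⟩ : SupHom B B) inf_le_right)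
  · exact fun y hy => hx₂ y (hy.trans inf_le_right)

theorem supClosed_exKer (hsup : ∀ x y, h (x ⊔ y) = h x ⊔ h y) : SupClosed (exKer h) := by
  rintro _ ⟨x₁, x₂, rfl, hx₁, hx₂⟩ _ ⟨x₁', x₂', rfl, hx₁', hx₂'⟩
  refine ⟨x₁ ⊔ x₁', x₂ ⊔ x₂', sup_sup_sup_comm .., by rw [hsup, hx₁, hx₁', bot_sup_eq], ?_⟩
  intro y hy
  have hy' : y \ x₂ ≤ x₂' := sdiff_le_iff.2 hy
  calc h y = h (y ⊓ x₂ ⊔ y \ x₂) := by rw [sup_inf_sdiff]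
    _ = y ⊓ x₂ ⊔ y \ x₂ := by rw [hsup, hx₂ _ inf_le_right, hx₂' _ hy']
    _ = y := sup_inf_sdiff y x₂

theorem isIdeal_exKer (hsup : ∀ x y, h (x ⊔ y) = h x ⊔ h y) (hbot : h ⊥ = ⊥) :
    Order.IsIdeal (exKer h) where
  IsLowerSet := isLowerSet_exKer hsup
  Nonempty := ⟨⊥, ⊥, ⊥, (sup_bot_eq ⊥).symm, hbot, fun y hy => by rw [le_bot_iff.1 hy, hbot]⟩
  Directed := (supClosed_exKer hsup).directedOn

theorem mem_exKer_of_forall_apply_le (hsup : ∀ x y, h (x ⊔ y) = h x ⊔ h y) {d : B}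
    (hd : ∀ e ≤ d, h e ≤ e) : d ∈ exKer h := by
  have hrestrict : ∀ y ≤ d, h y = y ⊓ h d := by
    intro y hy
    have hdisj : Disjoint y (h (d \ y)) := disjoint_sdiff_self_right.mono_right (hd _ sdiff_le)
    calc h y = y ⊓ h y := (inf_eq_right.2 (hd y hy)).symm
      _ = y ⊓ h y ⊔ y ⊓ h (d \ y) := by rw [hdisj.eq_bot, sup_bot_eq]
      _ = y ⊓ h d := by rw [← inf_sup_left, ← hsup, sup_sdiff_cancel_right hy]
  refine ⟨d \ h d, d ⊓ h d, (sup_sdiff_inf d (h d)).symm, ?_, fun y hy => ?_⟩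
  · rw [hrestrict _ sdiff_le, disjoint_sdiff_self_left.eq_bot]
  · rw [hrestrict y (hy.trans inf_le_left), inf_eq_left.2 (hy.trans inf_le_right)]

end exKer

theorem exists_antichain_of_infinite_quotient_general (h : B → B)
    (hsup : ∀ x y, h (x ⊔ y) = h x ⊔ h y)
    (hbot : h ⊥ = ⊥)
    (hquot : Infinite (Quot (fun x y : B => symmDiff x y ∈ exKer h))) :
    ∃ d : ℕ → B, (∀ m n, m ≠ n → Disjoint (d m) (d n)) ∧ ∀ n, ¬ h (d n) ≤ d n := by
  obtain ⟨a, ha_disj, ha_notMem⟩ :=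
    (isIdeal_exKer hsup hbot).toIdeal.exists_pairwise_disjoint_notMem hquot
  have : ∀ n, ∃ e ≤ a n, ¬ h e ≤ e := fun n => by
    by_contra! hn
    exact ha_notMem n (mem_exKer_of_forall_apply_le hsup hn)
  choose e he_le he using this
  exact ⟨e, fun m n hmn => (ha_disj hmn).mono (he_le m) (he_le n), he⟩

/-- If `h` is an endomorphism of `B` and `B / Ex Ker(h)` is infinite, then there are
pairwise disjoint `dₙ ∈ B` with `h dₙ ≰ dₙ` for every `n`. -/
theorem exists_antichain_of_infinite_quotient (h : B → B)
    (hsup : ∀ x y, h (x ⊔ y) = h x ⊔ h y)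
    (hinf : ∀ x y, h (x ⊓ y) = h x ⊓ h y)
    (hbot : h ⊥ = ⊥) (htop : h ⊤ = ⊤)
    (hquot : Infinite (Quot (fun x y : B => symmDiff x y ∈ exKer h))) :
    ∃ d : ℕ → B, (∀ m n, m ≠ n → Disjoint (d m) (d n)) ∧ ∀ n, ¬ h (d n) ≤ d n :=
  exists_antichain_of_infinite_quotient_general h hsup hbot hquot
end

section
/- If B¹ is an ℵ₁-compact Boolean subalgebra of a Boolean algebra C, z ∈ C, and B² is the subalgebra of C generated by B¹ ∪ {z}, then B² is ℵ₁-compact. -/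
/-!
Write each `dₙ` of a disjoint sequence in the generated subalgebra as `(aₙ ⊓ z) ⊔ (bₙ \ z)` with
`aₙ, bₙ ∈ B¹`. Disjointifying `(aₙ)` and `(bₙ)` inside `B¹` keeps this representation, because the
pieces `aₙ ⊓ z` (and `bₙ \ z`) are already pairwise disjoint. Then `B¹` separates the even from
the odd `aₙ` by some `u` and the even from the odd `bₙ` by some `v`, and `(u ⊓ z) ⊔ (v \ z)`
separates the even from the odd `dₙ`, since meets are computed separately below `z` and below `zᶜ`.
-/

variable {C : Type*} [BooleanAlgebra C]

/-- `S` is (the underlying set of) a Boolean subalgebra. -/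
def IsSubalg (S : Set C) : Prop :=
  ⊥ ∈ S ∧ ⊤ ∈ S ∧ (∀ a ∈ S, ∀ b ∈ S, a ⊔ b ∈ S) ∧
    (∀ a ∈ S, ∀ b ∈ S, a ⊓ b ∈ S) ∧ (∀ a ∈ S, aᶜ ∈ S)

/-- `S` is ℵ₁-compact: for every pairwise disjoint sequence `dₙ` from `S` there is
`x ∈ S` with `x ⊓ d_{2n+1} = ⊥` and `x ⊓ d_{2n} = d_{2n}` for all `n`. -/
def Aleph1Compact (S : Set C) : Prop :=
  ∀ d : ℕ → C, (∀ n, d n ∈ S) → (∀ m n, m ≠ n → Disjoint (d m) (d n)) →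
    ∃ x ∈ S, ∀ n, x ⊓ d (2 * n + 1) = ⊥ ∧ x ⊓ d (2 * n) = d (2 * n)

open Function

theorem inf_sup_sdiff_inf_inf_sup_sdiff {α : Type*} [GeneralizedBooleanAlgebra α]
    (z u v p q : α) :
    ((u ⊓ z) ⊔ (v \ z)) ⊓ ((p ⊓ z) ⊔ (q \ z)) = (u ⊓ p ⊓ z) ⊔ ((v ⊓ q) \ z) := by
  have huq : Disjoint (u ⊓ z) (q \ z) := disjoint_sdiff_self_right.mono_left inf_le_right
  have hvp : Disjoint (v \ z) (p ⊓ z) := disjoint_sdiff_self_left.mono_right inf_le_right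
  rw [inf_sup_left, inf_sup_right, inf_sup_right, huq.eq_bot, hvp.eq_bot, sup_bot_eq,
    bot_sup_eq, inf_inf_distrib_right u p z, inf_sdiff]

theorem disjointed_inf_eq_of_pairwise_disjoint_inf {ι α : Type*} [Preorder ι]
    [LocallyFiniteOrderBot ι] [GeneralizedBooleanAlgebra α] {f : ι → α} {w : α}
    (h : Pairwise (Disjoint on fun i ↦ f i ⊓ w)) (i : ι) :
    disjointed f i ⊓ w = f i ⊓ w := by
  rw [disjointed_apply, sdiff_inf_right_comm, sdiff_eq_left, Finset.disjoint_sup_right]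
  intro j hj
  have hij : Disjoint (f i ⊓ w) (f j ⊓ w) := h (Finset.mem_Iio.mp hj).ne'
  rw [disjoint_iff, ← inf_inf_distrib_right] at hij
  rwa [disjoint_iff, inf_right_comm]

namespace IsSubalg

variable {S : Set C}

theorem sdiff_mem (hS : IsSubalg S) {a b : C} (ha : a ∈ S) (hb : b ∈ S) : a \ b ∈ S := by
  rw [sdiff_eq]
  exact hS.2.2.2.1 a ha bᶜ (hS.2.2.2.2 b hb)

theorem disjointed_mem {ι : Type*} [Preorder ι] [LocallyFiniteOrderBot ι] (hS : IsSubalg S)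
    {f : ι → C} (hf : ∀ i, f i ∈ S) (i : ι) : disjointed f i ∈ S :=
  disjointedRec (fun _ j ht ↦ hS.sdiff_mem ht (hf j)) (hf i)

theorem exists_pairwise_disjoint_repr {ι : Type*} [LinearOrder ι] [LocallyFiniteOrderBot ι]
    (hS : IsSubalg S) (z : C) {d : ι → C}
    (hd : ∀ i, ∃ a ∈ S, ∃ b ∈ S, d i = (a ⊓ z) ⊔ (b \ z)) (hdisj : Pairwise (Disjoint on d)) :
    ∃ a b : ι → C, (∀ i, a i ∈ S) ∧ (∀ i, b i ∈ S) ∧ Pairwise (Disjoint on a) ∧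
      Pairwise (Disjoint on b) ∧ ∀ i, d i = (a i ⊓ z) ⊔ (b i \ z) := by
  choose a ha b hb hd using hd
  simp only [sdiff_eq] at hd ⊢
  have hza : Pairwise (Disjoint on fun i ↦ a i ⊓ z) := fun i j hij ↦
    (hdisj hij).mono (hd i ▸ le_sup_left) (hd j ▸ le_sup_left)
  have hzb : Pairwise (Disjoint on fun i ↦ b i ⊓ zᶜ) := fun i j hij ↦
    (hdisj hij).mono (hd i ▸ le_sup_right) (hd j ▸ le_sup_right)
  refine ⟨disjointed a, disjointed b, hS.disjointed_mem ha, hS.disjointed_mem hb,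
    disjoint_disjointed a, disjoint_disjointed b, fun i ↦ ?_⟩
  rw [hd i, disjointed_inf_eq_of_pairwise_disjoint_inf hza,
    disjointed_inf_eq_of_pairwise_disjoint_inf hzb]

end IsSubalg

/-- If `B¹` is an ℵ₁-compact subalgebra of `C` and `z ∈ C`, then the subalgebra generated
by `B¹ ∪ {z}` (whose elements are exactly those of the form `(d¹ ⊓ z) ⊔ (d² \ z)` with
`d¹, d² ∈ B¹`) is ℵ₁-compact. -/
theorem aleph1Compact_extend (B1 : Set C) (hB1 : IsSubalg B1)
    (z : C) (hcompact : Aleph1Compact B1) :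
    Aleph1Compact {w | ∃ d₁ ∈ B1, ∃ d₂ ∈ B1, w = (d₁ ⊓ z) ⊔ (d₂ \ z)} := by
  intro d hd hdisj
  obtain ⟨a, b, ha, hb, hda, hdb, hrepr⟩ :=
    hB1.exists_pairwise_disjoint_repr z hd fun m n h ↦ hdisj m n h
  obtain ⟨u, hu, hua⟩ := hcompact a ha fun m n h ↦ hda h
  obtain ⟨v, hv, hvb⟩ := hcompact b hb fun m n h ↦ hdb h
  refine ⟨(u ⊓ z) ⊔ (v \ z), ⟨u, hu, v, hv, rfl⟩, fun n ↦ ⟨?_, ?_⟩⟩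
  · rw [hrepr, inf_sup_sdiff_inf_inf_sup_sdiff, (hua n).1, (hvb n).1, bot_inf_eq, bot_sdiff,
      sup_bot_eq]
  · rw [hrepr, inf_sup_sdiff_inf_inf_sup_sdiff, (hua n).2, (hvb n).2]
end

section
/- Every endo-rigid Boolean algebra B is Hopfian, i.e. every surjective endomorphism of B is an automorphism. -/
variable {B : Type*} [BooleanAlgebra B]

/-- `h` is an endomorphism of the Boolean algebra. -/
def IsEndo {C : Type*} [BooleanAlgebra C] (h : C → C) : Prop :=
  (∀ x y, h (x ⊔ y) = h x ⊔ h y) ∧ (∀ x y, h (x ⊓ y) = h x ⊓ h y) ∧ h ⊥ = ⊥ ∧ h ⊤ = ⊤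

/-- `B` is endo-rigid: for every endomorphism `h`, the quotient `B / Ex Ker(h)` is finite. -/
def EndoRigid (B : Type*) [BooleanAlgebra B] : Prop :=
  ∀ h : B → B, IsEndo h → Finite (Quot (fun x y : B => symmDiff x y ∈ exKer h))

section Aux

variable {h : B → B}

lemma IsEndo.mono (he : IsEndo h) : Monotone h := by
  intro x y hxy
  have h2 := he.2.1 x y
  rw [inf_eq_left.2 hxy] at h2
  exact inf_eq_left.1 h2.symm

lemma IsEndo.map_compl (he : IsEndo h) (x : B) : h xᶜ = (h x)ᶜ := by
  have hsup : Codisjoint (h x) (h xᶜ) := by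
    rw [codisjoint_iff, ← he.1, sup_compl_eq_top, he.2.2.2]
  have hinf : Disjoint (h x) (h xᶜ) := by
    rw [disjoint_iff, ← he.2.1, inf_compl_eq_bot, he.2.2.1]
  exact (IsCompl.compl_eq ⟨hinf, hsup⟩).symm

lemma IsEndo.map_sdiff (he : IsEndo h) (x y : B) : h (x \ y) = h x \ h y := by
  rw [sdiff_eq, sdiff_eq, he.2.1, he.map_compl]

lemma IsEndo.map_symmDiff (he : IsEndo h) (x y : B) :
    h (symmDiff x y) = symmDiff (h x) (h y) := by
  rw [symmDiff_def, symmDiff_def, he.1, he.map_sdiff, he.map_sdiff]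

lemma bot_mem_exKer (he : IsEndo h) : ⊥ ∈ exKer h :=
  ⟨⊥, ⊥, by simp, he.2.2.1, fun y hy => by rw [le_bot_iff.1 hy, he.2.2.1]⟩

lemma exKer_down (he : IsEndo h) {z w : B} (hzw : z ≤ w) (hw : w ∈ exKer h) :
    z ∈ exKer h := by
  obtain ⟨x₁, x₂, heq, h1, h2⟩ := hw
  refine ⟨z ⊓ x₁, z ⊓ x₂, ?_, ?_, fun y hy => h2 y (hy.trans inf_le_right)⟩
  · rw [← inf_sup_left, inf_eq_left.2 (heq ▸ hzw)]
  · exact le_bot_iff.1 (h1 ▸ he.mono inf_le_right)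

lemma exKer_sup (he : IsEndo h) {z w : B} (hz : z ∈ exKer h) (hw : w ∈ exKer h) :
    z ⊔ w ∈ exKer h := by
  obtain ⟨x₁, x₂, hzeq, hz1, hz2⟩ := hz
  obtain ⟨y₁, y₂, hweq, hw1, hw2⟩ := hw
  refine ⟨x₁ ⊔ y₁, x₂ ⊔ y₂, ?_, ?_, ?_⟩
  · rw [hzeq, hweq, sup_sup_sup_comm]
  · rw [he.1, hz1, hw1, bot_sup_eq]
  · intro y hy
    have hysplit : y = (y ⊓ x₂) ⊔ (y ⊓ y₂) := by
      rw [← inf_sup_left, inf_eq_left.2 hy]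
    calc h y = h ((y ⊓ x₂) ⊔ (y ⊓ y₂)) := by rw [← hysplit]
      _ = (y ⊓ x₂) ⊔ (y ⊓ y₂) := by
          rw [he.1, hz2 _ inf_le_right, hw2 _ inf_le_right]
      _ = y := hysplit.symm

lemma exKer_equiv (he : IsEndo h) :
    Equivalence (fun x y : B => symmDiff x y ∈ exKer h) where
  refl x := by simpa [symmDiff_self] using bot_mem_exKer he
  symm {x y} hxy := by rwa [symmDiff_comm]
  trans {x y z} h1 h2 := exKer_down he (symmDiff_triangle x y z) (exKer_sup he h1 h2)

end Aux

/-- Every endo-rigid Boolean algebra is Hopfian: every surjective endomorphism is an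
automorphism. -/
theorem endoRigid_hopfian (hB : EndoRigid B) (h : B → B) (he : IsEndo h)
    (hsurj : Function.Surjective h) : Function.Bijective h := by
  refine ⟨?_, hsurj⟩
  intro u v huv
  rw [← symmDiff_eq_bot]
  by_contra ha
  set a := symmDiff u v with hadef
  have haB : h a = ⊥ := by rw [hadef, he.map_symmDiff, huv, symmDiff_self]
  set g := Function.surjInv hsurj with hg
  set b : ℕ → B := fun n => g^[n] a with hb
  have hbs : ∀ n, h (b (n + 1)) = b n := by
    intro n
    simp only [hb, Function.iterate_succ_apply']
    exact Function.surjInv_eq hsurj _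
  have hitbot : ∀ k, h^[k] (⊥ : B) = ⊥ := fun k => Function.iterate_fixed he.2.2.1 k
  have hitb : ∀ k n, h^[k] (b (k + n)) = b n := by
    intro k
    induction k with
    | zero => intro n; simp
    | succ k ih =>
      intro n
      have hkn : k + 1 + n = (k + n) + 1 := by omega
      rw [hkn, Function.iterate_succ_apply, hbs (k + n), ih n]
  have hbn_a : ∀ n, h^[n] (b n) = a := by
    intro n
    have := hitb n 0
    simpa [hb] using this
  have hbig : ∀ {n m : ℕ}, n < m → h^[m] (b n) = ⊥ := by
    intro n m hnm
    have hm : m = (m - n - 1) + 1 + n := by omega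
    rw [hm, Function.iterate_add_apply, hbn_a n, Function.iterate_succ_apply, haB, hitbot]
  have hiter_symm : ∀ (k : ℕ) (x y : B),
      h^[k] (symmDiff x y) = symmDiff (h^[k] x) (h^[k] y) := by
    intro k
    induction k with
    | zero => intro x y; simp
    | succ k ih =>
      intro x y
      rw [Function.iterate_succ_apply, he.map_symmDiff, ih,
        ← Function.iterate_succ_apply, ← Function.iterate_succ_apply]
  have hiter_sup : ∀ (k : ℕ) (x y : B), h^[k] (x ⊔ y) = h^[k] x ⊔ h^[k] y := by
    intro k
    induction k with
    | zero => intro x y; simp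
    | succ k ih =>
      intro x y
      rw [Function.iterate_succ_apply, he.1, ih,
        ← Function.iterate_succ_apply, ← Function.iterate_succ_apply]
  have hfin := hB h he
  have key : ∀ {n m : ℕ}, n < m →
      Quot.mk (fun x y : B => symmDiff x y ∈ exKer h) (b n) ≠
      Quot.mk (fun x y : B => symmDiff x y ∈ exKer h) (b m) := by
    intro n m hnm heq
    have hr : symmDiff (b n) (b m) ∈ exKer h :=
      ((exKer_equiv he).eqvGen_iff).1 (Quot.eqvGen_exact heq)
    obtain ⟨x₁, x₂, heq2, h1, h2⟩ := hr
    have hx2 : h x₂ = x₂ := h2 x₂ le_rfl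
    have hx2k : ∀ k, h^[k] x₂ = x₂ := fun k => Function.iterate_fixed hx2 k
    have hvk : ∀ k : ℕ, h^[k + 1] (symmDiff (b n) (b m)) = x₂ := by
      intro k
      rw [heq2, hiter_sup (k + 1) x₁ x₂, Function.iterate_succ_apply, h1, hitbot k,
        hx2k (k + 1), bot_sup_eq]
    have e1 : h^[m] (symmDiff (b n) (b m)) = a := by
      rw [hiter_symm, hbig hnm, hbn_a, bot_symmDiff]
    have e2 : h^[m + 1] (symmDiff (b n) (b m)) = ⊥ := by
      rw [hiter_symm, hbig (Nat.lt_succ_of_lt hnm), hbig (Nat.lt_succ_self m), symmDiff_self]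
    have hm1 : m = (m - 1) + 1 := by omega
    have hax : a = x₂ := by
      have hv := hvk (m - 1)
      rw [← hm1] at hv
      rw [← e1, hv]
    have hxb : x₂ = ⊥ := by rw [← e2, hvk]
    exact ha (hax.trans hxb)
  have hinj : Function.Injective
      (fun n => Quot.mk (fun x y : B => symmDiff x y ∈ exKer h) (b n)) := by
    intro n m hnm
    by_contra hne
    rcases Nat.lt_or_ge n m with hlt | hge
    · exact key hlt hnm
    · exact key (lt_of_le_of_ne hge (Ne.symm hne)) hnm.symm
  exact absurd hfin (@not_finite _ (Infinite.of_injective _ hinj))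
end

section
/- Every endo-rigid Boolean algebra B is dual Hopfian, i.e. every injective endomorphism of B is an automorphism. -/
variable {B : Type*} [BooleanAlgebra B]

/-!
For an injective `h`, `exKer h` consists of the elements below which `h` is the identity, and the
relation `x ∆ y ∈ exKer h` cancels `h`: if `h` fixes everything below `h x ∆ h y = h (x ∆ y)`,
injectivity shows it fixes everything below `x ∆ y`. By endo-rigidity two of the iterates
`hᵐ b`, `hᵐ⁺ᵏ⁺¹ b` are related, hence so are `b` and `hᵏ⁺¹ b`. Then `h` fixes `d = b ∆ hᵏ⁺¹ b`,
and `b = hᵏ⁺¹ b ∆ d = h (hᵏ b ∆ d)`.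
-/

open Function
open scoped symmDiff

def IsEndo.toBoundedLatticeHom {h : B → B} (he : IsEndo h) : BoundedLatticeHom B B where
  toFun := h
  map_sup' := he.1
  map_inf' := he.2.1
  map_top' := he.2.2.2
  map_bot' := he.2.2.1

def FixesBelow (h : B → B) (z : B) : Prop :=
  ∀ y ≤ z, h y = y

theorem exKer_eq_setOf_fixesBelow {h : B → B} (hbot : h ⊥ = ⊥) (hinj : Injective h) :
    exKer h = {z | FixesBelow h z} := by
  ext z
  constructor
  · rintro ⟨x₁, x₂, rfl, hx₁, hx₂⟩
    rwa [hinj (hx₁.trans hbot.symm), bot_sup_eq]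
  · exact fun hz => ⟨⊥, z, (bot_sup_eq z).symm, hbot, hz⟩

theorem FixesBelow.mono {h : B → B} {a b : B} (hb : FixesBelow h b) (hab : a ≤ b) :
    FixesBelow h a :=
  fun y hy => hb y (hy.trans hab)

section

variable (f : BoundedLatticeHom B B)

theorem fixesBelow_bot : FixesBelow f ⊥ :=
  fun y hy => by rw [le_bot_iff.1 hy, map_bot]

theorem FixesBelow.sup {a b : B} (ha : FixesBelow f a) (hb : FixesBelow f b) :
    FixesBelow f (a ⊔ b) := by
  intro y hy
  rw [← sup_inf_sdiff y a, map_sup, ha _ inf_le_right, hb _ (sdiff_le_iff.2 hy)]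

theorem equivalence_fixesBelow_symmDiff : Equivalence fun x y : B => FixesBelow f (x ∆ y) where
  refl x := by rw [symmDiff_self]; exact fixesBelow_bot f
  symm h := by rwa [symmDiff_comm]
  trans hxy hyz := (hxy.sup f hyz).mono (symmDiff_triangle _ _ _)

def fixesBelowSetoid : Setoid B :=
  ⟨fun x y => FixesBelow f (x ∆ y), equivalence_fixesBelow_symmDiff f⟩

theorem FixesBelow.of_map_symmDiff (hf : Injective f) {x y : B}
    (h : FixesBelow f (f x ∆ f y)) : FixesBelow f (x ∆ y) :=
  fun w hw => hf (h _ (by rw [← map_symmDiff']; exact OrderHomClass.mono f hw))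

theorem FixesBelow.of_iterate_map_symmDiff (hf : Injective f) (n : ℕ) {x y : B}
    (h : FixesBelow f (f^[n] x ∆ f^[n] y)) : FixesBelow f (x ∆ y) := by
  induction n generalizing x y with
  | zero => exact h
  | succ n ih =>
    rw [iterate_succ_apply, iterate_succ_apply] at h
    exact (ih h).of_map_symmDiff f hf

theorem mem_range_of_map_symmDiff_iterate_eq {b : B} {k : ℕ}
    (h : f (b ∆ f^[k + 1] b) = b ∆ f^[k + 1] b) : b ∈ Set.range f :=
  ⟨f^[k] b ∆ (b ∆ f^[k + 1] b), by
    rw [map_symmDiff', h, ← iterate_succ_apply' f, symmDiff_comm b,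
      symmDiff_symmDiff_cancel_left]⟩

end

/-- Every endo-rigid Boolean algebra is dual Hopfian: every injective endomorphism is an
automorphism. -/
theorem endoRigid_dual_hopfian (hB : EndoRigid B) (h : B → B) (he : IsEndo h)
    (hinj : Function.Injective h) : Function.Bijective h := by
  obtain ⟨f, rfl⟩ : ∃ f : BoundedLatticeHom B B, ⇑f = h := ⟨he.toBoundedLatticeHom, rfl⟩
  have hfin : Finite (Quotient (fixesBelowSetoid f)) := by
    have hrigid := hB f he
    simp only [exKer_eq_setOf_fixesBelow (map_bot f) hinj, Set.mem_ofPred_eq] at hrigid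
    exact hrigid
  refine ⟨hinj, fun b => ?_⟩
  obtain ⟨m, n, hmn, hiter⟩ := Set.finite_univ.exists_lt_map_eq_of_forall_mem
    (f := fun n : ℕ => (⟦f^[n] b⟧ : Quotient (fixesBelowSetoid f))) fun _ => Set.mem_univ _
  obtain ⟨k, rfl⟩ := Nat.exists_eq_add_of_lt hmn
  have hrel : FixesBelow f (f^[m] b ∆ f^[m] (f^[k + 1] b)) := by
    rw [← iterate_add_apply, ← add_assoc]
    exact Quotient.exact hiter
  exact mem_range_of_map_symmDiff_iterate_eq f (hrel.of_iterate_map_symmDiff f hinj m _ le_rfl)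
end

section
/- Let B₀ be the free Boolean algebra on generators {x_η : η ∈ T} and B₀ᶜ its completion. For every ν ∈ T, x_ν remains free over the set of all elements of B₀ᶜ that are based on {x_η : η ≠ ν} (i.e. lie in the complete subalgebra of B₀ᶜ generated by the other generators): for every nonzero such element y, y ∩ x_ν ≠ 0 and y − x_ν ≠ 0. -/
variable {T B : Type*} [CompleteBooleanAlgebra B]

def Indep (x : T → B) : Prop :=
  ∀ F G : Finset T, Disjoint F G →
    F.inf x ⊓ G.inf (fun η => (x η)ᶜ) ≠ ⊥

def subalgClosure (s : Set B) : Set B :=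
  ⋂₀ {S | s ⊆ S ∧ ⊥ ∈ S ∧ (∀ a ∈ S, ∀ b ∈ S, a ⊔ b ∈ S) ∧ (∀ a ∈ S, aᶜ ∈ S)}

/-- The complete subalgebra of `B` generated by `s`. -/
def cSubalgClosure (s : Set B) : Set B :=
  ⋂₀ {S | s ⊆ S ∧ (∀ t : Set B, t ⊆ S → sSup t ∈ S) ∧ (∀ a ∈ S, aᶜ ∈ S)}

namespace FreeGenAux

lemma subalg_subset {s S : Set B}
    (h : s ⊆ S ∧ ⊥ ∈ S ∧ (∀ a ∈ S, ∀ b ∈ S, a ⊔ b ∈ S) ∧ (∀ a ∈ S, aᶜ ∈ S)) :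
    subalgClosure s ⊆ S := fun _ hb => hb S h

lemma subset_subalg (s : Set B) : s ⊆ subalgClosure s :=
  fun b hb S hS => hS.1 hb

lemma bot_mem_subalg (s : Set B) : (⊥ : B) ∈ subalgClosure s :=
  fun S hS => hS.2.1

lemma sup_mem_subalg {s : Set B} {a b : B} (ha : a ∈ subalgClosure s)
    (hb : b ∈ subalgClosure s) : a ⊔ b ∈ subalgClosure s :=
  fun S hS => hS.2.2.1 a (ha S hS) b (hb S hS)

lemma compl_mem_subalg {s : Set B} {a : B} (ha : a ∈ subalgClosure s) :
    aᶜ ∈ subalgClosure s :=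
  fun S hS => hS.2.2.2 a (ha S hS)

lemma top_mem_subalg (s : Set B) : (⊤ : B) ∈ subalgClosure s := by
  have := compl_mem_subalg (bot_mem_subalg s)
  simpa using this

lemma inf_mem_subalg {s : Set B} {a b : B} (ha : a ∈ subalgClosure s)
    (hb : b ∈ subalgClosure s) : a ⊓ b ∈ subalgClosure s := by
  have := compl_mem_subalg (sup_mem_subalg (compl_mem_subalg ha) (compl_mem_subalg hb))
  simpa using this

/-- elementary product -/
def elemB (x : T → B) (q : Finset T × Finset T) : B :=
  q.1.inf x ⊓ q.2.inf (fun η => (x η)ᶜ)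

/-- normal forms: finite joins of elementary products with indices in `A` -/
def NFset (x : T → B) (A : Set T) : Set B :=
  {b | ∃ P : Finset (Finset T × Finset T),
    (∀ q ∈ P, (↑q.1 : Set T) ⊆ A ∧ (↑q.2 : Set T) ⊆ A) ∧ b = P.sup (elemB x)}

variable {x : T → B} {A : Set T}

lemma bot_mem_NF : (⊥ : B) ∈ NFset x A := ⟨∅, by simp, by simp⟩

lemma sup_mem_NF {a b : B} (ha : a ∈ NFset x A) (hb : b ∈ NFset x A) :
    a ⊔ b ∈ NFset x A := by
  classical
  obtain ⟨P, hP, rfl⟩ := ha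
  obtain ⟨Q, hQ, rfl⟩ := hb
  exact ⟨P ∪ Q, fun q hq => (Finset.mem_union.mp hq).elim (hP q) (hQ q),
    (Finset.sup_union).symm⟩

lemma elem_mem_NF {q : Finset T × Finset T} (h1 : (↑q.1 : Set T) ⊆ A)
    (h2 : (↑q.2 : Set T) ⊆ A) : elemB x q ∈ NFset x A :=
  ⟨{q}, by simpa using ⟨h1, h2⟩, by simp⟩

lemma gen_mem_NF {η : T} (hη : η ∈ A) : x η ∈ NFset x A := by
  classical
  have := elem_mem_NF (x := x) (q := ({η}, (∅ : Finset T)))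
    (by simpa using hη) (by simp)
  simpa [elemB] using this

lemma gen_compl_mem_NF {η : T} (hη : η ∈ A) : (x η)ᶜ ∈ NFset x A := by
  classical
  have := elem_mem_NF (x := x) (q := ((∅ : Finset T), {η}))
    (by simp) (by simpa using hη)
  simpa [elemB] using this

lemma top_mem_NF : (⊤ : B) ∈ NFset x A := by
  have := elem_mem_NF (x := x) (A := A) (q := ((∅ : Finset T), (∅ : Finset T)))
    (by simp) (by simp)
  simpa [elemB] using this

lemma inf_mem_NF {a b : B} (ha : a ∈ NFset x A) (hb : b ∈ NFset x A) :
    a ⊓ b ∈ NFset x A := by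
  classical
  obtain ⟨P, hP, rfl⟩ := ha
  obtain ⟨Q, hQ, rfl⟩ := hb
  refine ⟨(P ×ˢ Q).image (fun i => (i.1.1 ∪ i.2.1, i.1.2 ∪ i.2.2)), ?_, ?_⟩
  · intro q hq
    simp only [Finset.mem_image, Finset.mem_product] at hq
    obtain ⟨i, ⟨hi1, hi2⟩, rfl⟩ := hq
    constructor
    · simp only [Finset.coe_union, Set.union_subset_iff]
      exact ⟨(hP _ hi1).1, (hQ _ hi2).1⟩
    · simp only [Finset.coe_union, Set.union_subset_iff]
      exact ⟨(hP _ hi1).2, (hQ _ hi2).2⟩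
  · rw [Finset.sup_inf_sup, Finset.sup_image]
    apply Finset.sup_congr rfl
    intro i _
    simp only [Function.comp, elemB, Finset.inf_union]
    exact (inf_inf_inf_comm _ _ _ _).symm

lemma inf_gen_compl_mem_NF (F : Finset T) (h : (↑F : Set T) ⊆ A) :
    (F.inf x)ᶜ ∈ NFset x A := by
  classical
  induction F using Finset.induction_on with
  | empty => simpa using bot_mem_NF
  | @insert η F hF ihF =>
    rw [Finset.inf_insert, compl_inf]
    refine sup_mem_NF (gen_compl_mem_NF (h (by simp))) ?_
    exact ihF (fun t ht => h (Finset.mem_insert_of_mem ht))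

lemma inf_compls_compl_mem_NF (F : Finset T) (h : (↑F : Set T) ⊆ A) :
    (F.inf (fun η => (x η)ᶜ))ᶜ ∈ NFset x A := by
  classical
  induction F using Finset.induction_on with
  | empty => simpa using bot_mem_NF
  | @insert η F hF ihF =>
    rw [Finset.inf_insert, compl_inf, compl_compl]
    refine sup_mem_NF (gen_mem_NF (h (by simp))) ?_
    exact ihF (fun t ht => h (Finset.mem_insert_of_mem ht))

lemma compl_mem_NF {a : B} (ha : a ∈ NFset x A) : aᶜ ∈ NFset x A := by
  classical
  obtain ⟨P, hP, rfl⟩ := ha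
  induction P using Finset.induction_on with
  | empty => simpa using top_mem_NF
  | @insert q P hqP ih =>
    rw [Finset.sup_insert, compl_sup]
    refine inf_mem_NF ?_ (ih (fun r hr => hP r (Finset.mem_insert_of_mem hr)))
    obtain ⟨h1, h2⟩ := hP q (Finset.mem_insert_self _ _)
    rw [elemB, compl_inf]
    exact sup_mem_NF (inf_gen_compl_mem_NF _ h1) (inf_compls_compl_mem_NF _ h2)

lemma subalg_subset_NF : subalgClosure (x '' A) ⊆ NFset x A := by
  refine subalg_subset ⟨?_, bot_mem_NF, fun a ha b hb => sup_mem_NF ha hb,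
    fun a ha => compl_mem_NF ha⟩
  rintro b ⟨η, hη, rfl⟩
  exact gen_mem_NF hη


lemma ne_bot_of_le' {a b : B} (h : a ≠ ⊥) (hle : a ≤ b) : b ≠ ⊥ :=
  fun hb => h (le_bot_iff.mp (hb ▸ hle))

lemma gen_mem_subalg {η : T} (hη : η ∈ A) : x η ∈ subalgClosure (x '' A) :=
  subset_subalg _ ⟨η, hη, rfl⟩

lemma finset_inf_mem_subalg (F : Finset T) (h : (↑F : Set T) ⊆ A) :
    F.inf x ∈ subalgClosure (x '' A) := by
  classical
  induction F using Finset.induction_on with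
  | empty => simpa using top_mem_subalg _
  | @insert η F hF ihF =>
    rw [Finset.inf_insert]
    exact inf_mem_subalg (gen_mem_subalg (h (by simp)))
      (ihF (fun t ht => h (Finset.mem_insert_of_mem ht)))

lemma finset_inf_compl_mem_subalg (F : Finset T) (h : (↑F : Set T) ⊆ A) :
    F.inf (fun η => (x η)ᶜ) ∈ subalgClosure (x '' A) := by
  classical
  induction F using Finset.induction_on with
  | empty => simpa using top_mem_subalg _
  | @insert η F hF ihF =>
    rw [Finset.inf_insert]
    exact inf_mem_subalg (compl_mem_subalg (gen_mem_subalg (h (by simp))))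
      (ihF (fun t ht => h (Finset.mem_insert_of_mem ht)))

/-- Lemma A: any nonzero element of the subalgebra generated by the other
generators meets both `x ν` and `(x ν)ᶜ`. -/
lemma meets_both (hx : Indep x) (ν : T) {b : B}
    (hb : b ∈ subalgClosure (x '' {η | η ≠ ν})) (hne : b ≠ ⊥) :
    b ⊓ x ν ≠ ⊥ ∧ b ⊓ (x ν)ᶜ ≠ ⊥ := by
  classical
  obtain ⟨P, hP, rfl⟩ := subalg_subset_NF hb
  have hex : ∃ q ∈ P, elemB x q ≠ ⊥ := by
    by_contra h
    push_neg at h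
    exact hne ((Finset.sup_eq_bot_iff _ _).mpr h)
  obtain ⟨q, hqP, hq⟩ := hex
  have hdisj : Disjoint q.1 q.2 := by
    rw [Finset.disjoint_left]
    intro η h1 h2
    refine hq (le_bot_iff.mp ?_)
    calc elemB x q ≤ x η ⊓ (x η)ᶜ :=
          le_inf (inf_le_left.trans (Finset.inf_le h1))
            (inf_le_right.trans (Finset.inf_le h2))
      _ = ⊥ := inf_compl_eq_bot
  have hν1 : ν ∉ q.1 := fun h => ((hP q hqP).1 h) rfl
  have hν2 : ν ∉ q.2 := fun h => ((hP q hqP).2 h) rfl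
  have hleb : elemB x q ≤ P.sup (elemB x) := Finset.le_sup hqP
  constructor
  · have hind := hx (insert ν q.1) q.2 (Finset.disjoint_insert_left.mpr ⟨hν2, hdisj⟩)
    rw [Finset.inf_insert] at hind
    refine ne_bot_of_le' hind ?_
    refine le_inf (le_trans ?_ hleb) ((inf_le_left).trans inf_le_left)
    exact le_inf ((inf_le_left).trans inf_le_right) inf_le_right
  · have hind := hx q.1 (insert ν q.2) (Finset.disjoint_insert_right.mpr ⟨hν1, hdisj⟩)
    rw [Finset.inf_insert] at hind
    refine ne_bot_of_le' hind ?_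
    refine le_inf (le_trans ?_ hleb) (inf_le_right.trans inf_le_left)
    exact le_inf inf_le_left (inf_le_right.trans inf_le_right)


/-- Complement step, one direction. -/
lemma compl_step (hx : Indep x)
    (hdense : ∀ b : B, b ≠ ⊥ → ∃ c ∈ subalgClosure (Set.range x), c ≠ ⊥ ∧ c ≤ b)
    (ν : T) {y : B}
    (hy : ∀ c ∈ subalgClosure (x '' {η | η ≠ ν}),
      (c ⊓ x ν ⊓ y = ⊥ ↔ c ⊓ (x ν)ᶜ ⊓ y = ⊥))
    {c : B} (hc : c ∈ subalgClosure (x '' {η | η ≠ ν}))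
    (h : c ⊓ x ν ⊓ yᶜ ≠ ⊥) : c ⊓ (x ν)ᶜ ⊓ yᶜ ≠ ⊥ := by
  classical
  obtain ⟨e, he, hene, hle⟩ := hdense _ h
  rw [← Set.image_univ] at he
  obtain ⟨P, hP, rfl⟩ := subalg_subset_NF he
  have hex : ∃ q ∈ P, elemB x q ≠ ⊥ := by
    by_contra hco
    push_neg at hco
    exact hene ((Finset.sup_eq_bot_iff _ _).mpr hco)
  obtain ⟨q, hqP, hq⟩ := hex
  have hple : elemB x q ≤ c ⊓ x ν ⊓ yᶜ := (Finset.le_sup hqP).trans hle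
  have hpxν : elemB x q ≤ x ν := hple.trans (inf_le_left.trans inf_le_right)
  have hpc : elemB x q ≤ c := hple.trans (inf_le_left.trans inf_le_left)
  have hpyc : elemB x q ≤ yᶜ := hple.trans inf_le_right
  have hν2 : ν ∉ q.2 := by
    intro hm
    refine hq (le_bot_iff.mp ?_)
    calc elemB x q ≤ x ν ⊓ (x ν)ᶜ :=
          le_inf hpxν (inf_le_right.trans (Finset.inf_le hm))
      _ = ⊥ := inf_compl_eq_bot
  set a0 : B := (q.1.erase ν).inf x ⊓ q.2.inf (fun η => (x η)ᶜ) with ha0def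
  have ha0 : a0 ∈ subalgClosure (x '' {η | η ≠ ν}) := by
    refine inf_mem_subalg (finset_inf_mem_subalg _ ?_)
      (finset_inf_compl_mem_subalg _ ?_)
    · intro η hη
      exact (Finset.mem_erase.mp hη).1
    · intro η hη
      exact fun hbad => hν2 (hbad ▸ hη)
  have hkey : (q.1.erase ν).inf x ⊓ x ν = q.1.inf x ⊓ x ν := by
    apply le_antisymm
    · refine le_inf (Finset.le_inf ?_) inf_le_right
      intro η hη
      by_cases hη' : η = ν
      · subst hη'; exact inf_le_right
      · exact inf_le_left.trans (Finset.inf_le (Finset.mem_erase.mpr ⟨hη', hη⟩))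
    · exact inf_le_inf_right _ (Finset.inf_mono (Finset.erase_subset _ _))
  have ha0ν : a0 ⊓ x ν = elemB x q := by
    calc a0 ⊓ x ν = (q.1.erase ν).inf x ⊓ x ν ⊓ q.2.inf (fun η => (x η)ᶜ) := by
          rw [ha0def, inf_right_comm]
      _ = q.1.inf x ⊓ x ν ⊓ q.2.inf (fun η => (x η)ᶜ) := by rw [hkey]
      _ = elemB x q ⊓ x ν := by rw [elemB, inf_right_comm]
      _ = elemB x q := inf_eq_left.mpr hpxν
  set a : B := a0 ⊓ c with hadef
  have ha : a ∈ subalgClosure (x '' {η | η ≠ ν}) := inf_mem_subalg ha0 hc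
  have haν : a ⊓ x ν = elemB x q := by
    rw [hadef, inf_right_comm, ha0ν, inf_eq_left.mpr hpc]
  have h1 : a ⊓ x ν ⊓ y = ⊥ := by
    rw [haν]
    exact le_bot_iff.mp (le_trans (inf_le_inf_right y hpyc) (by simp))
  have h2 : a ⊓ (x ν)ᶜ ⊓ y = ⊥ := (hy a ha).mp h1
  have hane : a ≠ ⊥ := fun hb => hq (by rw [← haν, hb, bot_inf_eq])
  have hmeets : a ⊓ (x ν)ᶜ ≠ ⊥ := (meets_both hx ν ha hane).2
  refine ne_bot_of_le' hmeets ?_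
  have hyc : a ⊓ (x ν)ᶜ ≤ yᶜ :=
    le_compl_iff_disjoint_right.mpr (disjoint_iff.mpr h2)
  exact le_inf (le_inf (inf_le_left.trans inf_le_right) inf_le_right) hyc

/-- Complement step, other direction. -/
lemma compl_step' (hx : Indep x)
    (hdense : ∀ b : B, b ≠ ⊥ → ∃ c ∈ subalgClosure (Set.range x), c ≠ ⊥ ∧ c ≤ b)
    (ν : T) {y : B}
    (hy : ∀ c ∈ subalgClosure (x '' {η | η ≠ ν}),
      (c ⊓ x ν ⊓ y = ⊥ ↔ c ⊓ (x ν)ᶜ ⊓ y = ⊥))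
    {c : B} (hc : c ∈ subalgClosure (x '' {η | η ≠ ν}))
    (h : c ⊓ (x ν)ᶜ ⊓ yᶜ ≠ ⊥) : c ⊓ x ν ⊓ yᶜ ≠ ⊥ := by
  classical
  obtain ⟨e, he, hene, hle⟩ := hdense _ h
  rw [← Set.image_univ] at he
  obtain ⟨P, hP, rfl⟩ := subalg_subset_NF he
  have hex : ∃ q ∈ P, elemB x q ≠ ⊥ := by
    by_contra hco
    push_neg at hco
    exact hene ((Finset.sup_eq_bot_iff _ _).mpr hco)
  obtain ⟨q, hqP, hq⟩ := hex
  have hple : elemB x q ≤ c ⊓ (x ν)ᶜ ⊓ yᶜ := (Finset.le_sup hqP).trans hle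
  have hpxν : elemB x q ≤ (x ν)ᶜ := hple.trans (inf_le_left.trans inf_le_right)
  have hpc : elemB x q ≤ c := hple.trans (inf_le_left.trans inf_le_left)
  have hpyc : elemB x q ≤ yᶜ := hple.trans inf_le_right
  have hν1 : ν ∉ q.1 := by
    intro hm
    refine hq (le_bot_iff.mp ?_)
    calc elemB x q ≤ x ν ⊓ (x ν)ᶜ :=
          le_inf (inf_le_left.trans (Finset.inf_le hm)) hpxν
      _ = ⊥ := inf_compl_eq_bot
  set a0 : B := q.1.inf x ⊓ (q.2.erase ν).inf (fun η => (x η)ᶜ) with ha0def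
  have ha0 : a0 ∈ subalgClosure (x '' {η | η ≠ ν}) := by
    refine inf_mem_subalg (finset_inf_mem_subalg _ ?_)
      (finset_inf_compl_mem_subalg _ ?_)
    · intro η hη
      exact fun hbad => hν1 (hbad ▸ hη)
    · intro η hη
      exact (Finset.mem_erase.mp hη).1
  have hkey : (q.2.erase ν).inf (fun η => (x η)ᶜ) ⊓ (x ν)ᶜ
      = q.2.inf (fun η => (x η)ᶜ) ⊓ (x ν)ᶜ := by
    apply le_antisymm
    · refine le_inf (Finset.le_inf ?_) inf_le_right
      intro η hη
      by_cases hη' : η = ν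
      · subst hη'; exact inf_le_right
      · exact inf_le_left.trans (Finset.inf_le (Finset.mem_erase.mpr ⟨hη', hη⟩))
    · exact inf_le_inf_right _ (Finset.inf_mono (Finset.erase_subset _ _))
  have ha0ν : a0 ⊓ (x ν)ᶜ = elemB x q := by
    calc a0 ⊓ (x ν)ᶜ
        = q.1.inf x ⊓ ((q.2.erase ν).inf (fun η => (x η)ᶜ) ⊓ (x ν)ᶜ) := by
          rw [ha0def, inf_assoc]
      _ = q.1.inf x ⊓ (q.2.inf (fun η => (x η)ᶜ) ⊓ (x ν)ᶜ) := by rw [hkey]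
      _ = elemB x q ⊓ (x ν)ᶜ := by rw [elemB, inf_assoc]
      _ = elemB x q := inf_eq_left.mpr hpxν
  set a : B := a0 ⊓ c with hadef
  have ha : a ∈ subalgClosure (x '' {η | η ≠ ν}) := inf_mem_subalg ha0 hc
  have haν : a ⊓ (x ν)ᶜ = elemB x q := by
    rw [hadef, inf_right_comm, ha0ν, inf_eq_left.mpr hpc]
  have h1 : a ⊓ (x ν)ᶜ ⊓ y = ⊥ := by
    rw [haν]
    exact le_bot_iff.mp (le_trans (inf_le_inf_right y hpyc) (by simp))
  have h2 : a ⊓ x ν ⊓ y = ⊥ := (hy a ha).mpr h1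
  have hane : a ≠ ⊥ := fun hb => hq (by rw [← haν, hb, bot_inf_eq])
  have hmeets : a ⊓ x ν ≠ ⊥ := (meets_both hx ν ha hane).1
  refine ne_bot_of_le' hmeets ?_
  have hyc : a ⊓ x ν ≤ yᶜ :=
    le_compl_iff_disjoint_right.mpr (disjoint_iff.mpr h2)
  exact le_inf (le_inf (inf_le_left.trans inf_le_right) inf_le_right) hyc

end FreeGenAux

/-- In the completion `B₀ᶜ` of the free Boolean algebra on `{x_η : η ∈ T}` (a complete
Boolean algebra in which the subalgebra generated by the independent family `x` is dense),
each `x_ν` remains free over the set of elements based on the remaining generators, i.e.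
over the complete subalgebra generated by `{x_η : η ≠ ν}`. -/
theorem generator_free_over_complete_subalgebra (x : T → B) (hx : Indep x)
    (hdense : ∀ b : B, b ≠ ⊥ → ∃ c ∈ subalgClosure (Set.range x), c ≠ ⊥ ∧ c ≤ b)
    (ν : T) :
    ∀ y ∈ cSubalgClosure (x '' {η | η ≠ ν}), y ≠ ⊥ → y ⊓ x ν ≠ ⊥ ∧ y \ x ν ≠ ⊥ := by
  open FreeGenAux in
  intro y hyc hyne
  -- the invariant set
  set S : Set B := {z | ∀ c ∈ subalgClosure (x '' {η | η ≠ ν}),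
    (c ⊓ x ν ⊓ z = ⊥ ↔ c ⊓ (x ν)ᶜ ⊓ z = ⊥)} with hSdef
  have hS : y ∈ S := by
    refine hyc S ⟨?_, ?_, ?_⟩
    · -- generators
      rintro z ⟨μ, hμ, rfl⟩ c hc
      have hd : c ⊓ x μ ∈ subalgClosure (x '' {η | η ≠ ν}) :=
        inf_mem_subalg hc (gen_mem_subalg hμ)
      rw [inf_right_comm c (x ν) (x μ), inf_right_comm c (x ν)ᶜ (x μ)]
      by_cases hdb : c ⊓ x μ = ⊥
      · rw [hdb]; simp
      · have hm := meets_both hx ν hd hdb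
        exact iff_of_false hm.1 hm.2
    · -- sSup-closed
      intro t ht c hc
      rw [inf_sSup_eq, inf_sSup_eq]
      simp only [iSup_eq_bot]
      constructor
      · intro h b hb
        exact (ht hb c hc).mp (h b hb)
      · intro h b hb
        exact (ht hb c hc).mpr (h b hb)
    · -- compl-closed
      intro z hz c hc
      constructor
      · intro h
        by_contra h'
        exact (compl_step' hx hdense ν hz hc h') h
      · intro h
        by_contra h'
        exact (compl_step hx hdense ν hz hc h') h
  have htop := hS ⊤ (top_mem_subalg _)
  simp only [top_inf_eq] at htop
  have hiff : y ⊓ x ν = ⊥ ↔ y ⊓ (x ν)ᶜ = ⊥ := by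
    rw [inf_comm y (x ν), inf_comm y (x ν)ᶜ]
    exact htop
  have hysplit : y = (y ⊓ x ν) ⊔ (y ⊓ (x ν)ᶜ) := by
    rw [← inf_sup_left, sup_compl_eq_top, inf_top_eq]
  constructor
  · intro h
    exact hyne (by rw [hysplit, h, hiff.mp h, bot_sup_eq])
  · rw [sdiff_eq]
    intro h
    exact hyne (by rw [hysplit, hiff.mpr h, h, bot_sup_eq])
end

section
/- In a free Boolean algebra on generators {x_η : η ∈ T}, suppose x = ⋂_{ℓ<n} τ_ℓ ∩ ⋂_{ℓ<m} σ_ℓ is nonzero, where each τ_ℓ lies in the subalgebra A generated by {x_η : η ∈ S} for some S ⊆ T, and each σ_ℓ ∈ {x_{ν_ℓ}, 1 − x_{ν_ℓ}} with ν₀,…,ν_{m−1} ∈ T∖S distinct. Then pr_A(x) = ⋂_{ℓ<n} τ_ℓ, where pr_A(x) is the least element of the completion of A above x. -/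
variable {T B : Type*} [CompleteBooleanAlgebra B]

def prj (A : Set B) (x : B) : B := sInf {a ∈ A | x ≤ a}

/-!
Call `a` cancelling outside `S` if `c ⊓ d ≤ a` implies `c ≤ a` whenever `c` lies in the subalgebra
generated by `{x_η : η ∈ S}` and `d ≠ ⊥` in the one generated by `{x_η : η ∉ S}`. Independence
makes nonzero elements of these two subalgebras meet, so every element of the first one cancels
outside `S`. Density of the subalgebra generated by all `x_η` shows that `a` cancels as soon as
`aᶜ` does, so the property is closed under complements and arbitrary suprema and holds on the whole
complete subalgebra `A`. With `c = ⨅ τ_ℓ` and `d = ⨅ σ_ℓ`, every element of `A` above `z` lies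
above `⨅ τ_ℓ`.
-/

open BooleanSubalgebra

theorem subalgClosure_eq_closure (s : Set B) : subalgClosure s = closure s := by
  refine Set.Subset.antisymm (fun a ha => ha _ ⟨subset_closure, bot_mem,
    fun _ ha _ hb => sup_mem ha hb, fun _ ha => compl_mem ha⟩) fun a ha => ?_
  induction ha using closure_bot_sup_induction with
  | mem a ha => exact fun S hS => hS.1 ha
  | bot => exact fun S hS => hS.2.1
  | sup a _ b _ ha hb => exact fun S hS => hS.2.2.1 a (ha S hS) b (hb S hS)
  | compl a _ ha => exact fun S hS => hS.2.2.2 a (ha S hS)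

section cSubalgClosure

variable {s : Set B}

theorem subset_cSubalgClosure : s ⊆ cSubalgClosure s := fun _ ha _ hS => hS.1 ha

theorem sSup_mem_cSubalgClosure {t : Set B} (ht : t ⊆ cSubalgClosure s) :
    sSup t ∈ cSubalgClosure s := fun S hS => hS.2.1 t fun _ ha => ht ha S hS

theorem compl_mem_cSubalgClosure {a : B} (ha : a ∈ cSubalgClosure s) :
    aᶜ ∈ cSubalgClosure s := fun S hS => hS.2.2 a (ha S hS)

theorem cSubalgClosure_subset {S : Set B} (hs : s ⊆ S) (hsSup : ∀ t ⊆ S, sSup t ∈ S)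
    (hcompl : ∀ a ∈ S, aᶜ ∈ S) : cSubalgClosure s ⊆ S := fun _ ha => ha S ⟨hs, hsSup, hcompl⟩

theorem closure_subset_cSubalgClosure : (closure s : Set B) ⊆ cSubalgClosure s := by
  intro a ha
  induction ha using closure_bot_sup_induction with
  | mem a ha => exact subset_cSubalgClosure ha
  | bot => simpa using sSup_mem_cSubalgClosure (s := s) (Set.empty_subset _)
  | sup a _ b _ ha hb =>
    simpa using sSup_mem_cSubalgClosure (Set.insert_subset ha (Set.singleton_subset_iff.2 hb))
  | compl a _ ha => exact compl_mem_cSubalgClosure ha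

end cSubalgClosure

theorem BooleanSubalgebra.finsetInf_mem {ι : Type*} (L : BooleanSubalgebra B) (H : Finset ι)
    {f : ι → B} (hf : ∀ i ∈ H, f i ∈ L) : H.inf f ∈ L :=
  Finset.inf_mem (L : Set B) L.top_mem (fun _ ha _ hb => L.inf_mem ha hb) H f hf

def literal (x : T → B) (ε : T → Bool) (η : T) : B := if ε η then x η else (x η)ᶜ

section minterm

variable {x : T → B}

theorem literal_mem_closure {U : Set T} (ε : T → Bool) {η : T} (hη : η ∈ U) :
    literal x ε η ∈ closure (x '' U) := by
  have hx : x η ∈ closure (x '' U) := subset_closure ⟨η, hη, rfl⟩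
  unfold literal
  split
  · exact hx
  · exact compl_mem hx

theorem inf_literal_mem_closure {U : Set T} (ε : T → Bool) {H : Finset T} (hH : ↑H ⊆ U) :
    H.inf (literal x ε) ∈ closure (x '' U) :=
  finsetInf_mem _ H fun _ hη => literal_mem_closure ε (hH hη)

theorem Indep.inf_literal_ne_bot (hx : Indep x) (H : Finset T) (ε : T → Bool) :
    H.inf (literal x ε) ≠ ⊥ := by
  classical
  have hsplit := Finset.filter_union_filter_not_eq (fun η => ε η = true) H
  rw [← hsplit, Finset.inf_union]
  convert hx _ _ (Finset.disjoint_filter_filter_not H H fun η => ε η = true) using 2 <;>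
    exact Finset.inf_congr rfl fun η hη => by simp [literal, (Finset.mem_filter.1 hη).2]

theorem exists_inf_literal_inf_ne_bot (x : T → B) (H : Finset T) {b : B} (hb : b ≠ ⊥) :
    ∃ ε, H.inf (literal x ε) ⊓ b ≠ ⊥ := by
  classical
  induction H using Finset.induction_on generalizing b with
  | empty => exact ⟨fun _ => true, by simpa using hb⟩
  | @insert η H hη ih =>
    obtain ⟨s, hs⟩ : ∃ s : Bool, b ⊓ literal x (fun _ => s) η ≠ ⊥ := by
      by_contra! h
      apply hb
      have hpos : b ⊓ x η = ⊥ := by simpa [literal] using h true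
      have hneg : b ⊓ (x η)ᶜ = ⊥ := by simpa [literal] using h false
      rw [← inf_top_eq b, ← sup_compl_eq_top (x := x η), inf_sup_left, hpos, hneg, sup_bot_eq]
    obtain ⟨ε, hε⟩ := ih hs
    refine ⟨Function.update ε η s, ?_⟩
    have hH : H.inf (literal x (Function.update ε η s)) = H.inf (literal x ε) :=
      Finset.inf_congr rfl fun ν hν => by
        simp [literal, Function.update_of_ne (ne_of_mem_of_not_mem hν hη)]
    rw [Finset.inf_insert, hH]
    convert hε using 1
    simp only [literal, Function.update_self]
    ac_rfl

def Decides (x : T → B) (H : Finset T) (a : B) : Prop :=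
  ∀ ε, H.inf (literal x ε) ≤ a ∨ H.inf (literal x ε) ≤ aᶜ

theorem Decides.mono {H H' : Finset T} {a : B} (h : Decides x H a) (hH : H ⊆ H') :
    Decides x H' a := fun ε =>
  (h ε).imp (Finset.inf_mono hH).trans (Finset.inf_mono hH).trans

theorem Decides.compl {H : Finset T} {a : B} (h : Decides x H a) : Decides x H aᶜ := fun ε =>
  (h ε).symm.imp_right fun h => h.trans (compl_compl a).ge

theorem Decides.sup [DecidableEq T] {H₁ H₂ : Finset T} {a b : B} (ha : Decides x H₁ a)
    (hb : Decides x H₂ b) : Decides x (H₁ ∪ H₂) (a ⊔ b) := by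
  intro ε
  rcases ha.mono Finset.subset_union_left ε with ha | ha
  · exact .inl (ha.trans le_sup_left)
  rcases hb.mono Finset.subset_union_right ε with hb | hb
  · exact .inl (hb.trans le_sup_right)
  · exact .inr (compl_sup (a := a) ▸ le_inf ha hb)

theorem decides_singleton (η : T) : Decides x {η} (x η) := by
  intro ε
  cases h : ε η <;> simp [literal, h]

theorem exists_decides_of_mem_closure {U : Set T} {a : B} (ha : a ∈ closure (x '' U)) :
    ∃ H : Finset T, ↑H ⊆ U ∧ Decides x H a := by
  classical
  induction ha using closure_bot_sup_induction with
  | mem _ ha =>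
    obtain ⟨η, hη, rfl⟩ := ha
    exact ⟨{η}, by simpa using hη, decides_singleton η⟩
  | bot => exact ⟨∅, by simp, fun _ => .inr (by simp)⟩
  | sup _ _ _ _ ha hb =>
    obtain ⟨H₁, hH₁, ha⟩ := ha
    obtain ⟨H₂, hH₂, hb⟩ := hb
    exact ⟨H₁ ∪ H₂, by simp [hH₁, hH₂], ha.sup hb⟩
  | compl _ _ ha =>
    obtain ⟨H, hH, ha⟩ := ha
    exact ⟨H, hH, ha.compl⟩

theorem exists_inf_literal_le_of_mem_closure {U : Set T} {a : B} (ha : a ∈ closure (x '' U))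
    (hne : a ≠ ⊥) : ∃ H : Finset T, ↑H ⊆ U ∧ ∃ ε, H.inf (literal x ε) ≤ a := by
  obtain ⟨H, hHU, hH⟩ := exists_decides_of_mem_closure ha
  obtain ⟨ε, hε⟩ := exists_inf_literal_inf_ne_bot x H hne
  exact ⟨H, hHU, ε, (hH ε).resolve_right fun h =>
    hε (disjoint_iff.1 (le_compl_iff_disjoint_right.1 h))⟩

theorem Indep.inf_ne_bot_of_mem_closure (hx : Indep x) {S : Set T} {c d : B}
    (hc : c ∈ closure (x '' S)) (hd : d ∈ closure (x '' Sᶜ)) (hc₀ : c ≠ ⊥) (hd₀ : d ≠ ⊥) :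
    c ⊓ d ≠ ⊥ := by
  classical
  obtain ⟨H₁, hH₁, ε₁, hc⟩ := exists_inf_literal_le_of_mem_closure hc hc₀
  obtain ⟨H₂, hH₂, ε₂, hd⟩ := exists_inf_literal_le_of_mem_closure hd hd₀
  have hε (H : Finset T) (ε : T → Bool) (hε : ∀ η ∈ H, S.piecewise ε₁ ε₂ η = ε η) :
      H.inf (literal x (S.piecewise ε₁ ε₂)) = H.inf (literal x ε) :=
    Finset.inf_congr rfl fun η hη => by simp [literal, hε η hη]
  have hmin := hx.inf_literal_ne_bot (H₁ ∪ H₂) (S.piecewise ε₁ ε₂)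
  rw [Finset.inf_union, hε H₁ ε₁ fun η hη => S.piecewise_eq_of_mem _ _ (hH₁ hη),
    hε H₂ ε₂ fun η hη => S.piecewise_eq_of_notMem _ _ (hH₂ hη)] at hmin
  exact ne_bot_of_le_ne_bot hmin (inf_le_inf hc hd)

theorem Indep.exists_inf_le_of_mem_closure_range (hx : Indep x) (S : Set T) {e : B}
    (he : e ∈ closure (Set.range x)) (he₀ : e ≠ ⊥) :
    ∃ c ∈ closure (x '' S), ∃ d ∈ closure (x '' Sᶜ), c ⊓ d ≠ ⊥ ∧ c ⊓ d ≤ e := by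
  classical
  rw [← Set.image_univ] at he
  obtain ⟨H, -, ε, hH⟩ := exists_inf_literal_le_of_mem_closure he he₀
  have hsplit : (H.filter (· ∈ S)).inf (literal x ε) ⊓ (H.filter (· ∉ S)).inf (literal x ε) =
      H.inf (literal x ε) := by
    rw [← Finset.inf_union, Finset.filter_union_filter_not_eq]
  refine ⟨_, inf_literal_mem_closure ε (H := H.filter (· ∈ S)) fun η hη => ?_,
    _, inf_literal_mem_closure ε (H := H.filter (· ∉ S)) fun η hη => ?_, ?_⟩
  · exact (Finset.mem_filter.1 hη).2
  · exact (Finset.mem_filter.1 hη).2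
  · rw [hsplit]
    exact ⟨hx.inf_literal_ne_bot H ε, hH⟩

end minterm

def CancelsOutside (x : T → B) (S : Set T) (a : B) : Prop :=
  ∀ c ∈ closure (x '' S), ∀ d ∈ closure (x '' Sᶜ), d ≠ ⊥ → c ⊓ d ≤ a → c ≤ a

section CancelsOutside

variable {x : T → B} {S : Set T}

theorem inf_compl_ne_bot_of_not_le {a b : B} (h : ¬a ≤ b) : a ⊓ bᶜ ≠ ⊥ :=
  fun hab => h (disjoint_compl_right_iff.1 (disjoint_iff.2 hab))

theorem Indep.cancelsOutside_of_mem_closure (hx : Indep x) {a : B}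
    (ha : a ∈ closure (x '' S)) : CancelsOutside x S a := by
  intro c hc d hd hd₀ hcd
  by_contra hca
  refine hx.inf_ne_bot_of_mem_closure (inf_mem hc (compl_mem ha)) hd
    (inf_compl_ne_bot_of_not_le hca) hd₀ (le_bot_iff.1 ?_)
  calc c ⊓ aᶜ ⊓ d = c ⊓ d ⊓ aᶜ := inf_right_comm _ _ _
    _ ≤ a ⊓ aᶜ := inf_le_inf_right _ hcd
    _ = ⊥ := inf_compl_eq_bot

variable (hx : Indep x)
  (hdense : ∀ b : B, b ≠ ⊥ → ∃ e ∈ closure (Set.range x), e ≠ ⊥ ∧ e ≤ b)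
include hx hdense

/-- If `c ⊓ d ≤ b` but `c ≰ b`, density puts a nonzero minterm `m₁ ⊓ m₂` below `c ⊓ bᶜ`, split into
its parts over `S` and over `Sᶜ`; cancellation for `bᶜ` gives `c ⊓ m₁ ≤ bᶜ`, while independence
makes `c ⊓ m₁ ⊓ d ≤ b` nonzero. -/
theorem CancelsOutside.of_compl {b : B} (h : CancelsOutside x S bᶜ) : CancelsOutside x S b := by
  intro c hc d hd hd₀ hcd
  by_contra hcb
  obtain ⟨e, he, he₀, heb⟩ := hdense _ (inf_compl_ne_bot_of_not_le hcb)
  obtain ⟨m₁, hm₁, m₂, hm₂, hm₀, hme⟩ := hx.exists_inf_le_of_mem_closure_range S he he₀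
  have hm : m₁ ⊓ m₂ ≤ c ⊓ bᶜ := hme.trans heb
  have hcm₁ : c ⊓ m₁ ≤ bᶜ :=
    h _ (inf_mem hc hm₁) m₂ hm₂ (ne_bot_of_le_ne_bot hm₀ inf_le_right)
      ((inf_le_inf_right _ inf_le_right).trans (hm.trans inf_le_right))
  refine hx.inf_ne_bot_of_mem_closure (inf_mem hc hm₁) hd
    (ne_bot_of_le_ne_bot hm₀ (le_inf (hm.trans inf_le_left) inf_le_left)) hd₀ (le_bot_iff.1 ?_)
  calc c ⊓ m₁ ⊓ d ≤ bᶜ ⊓ b :=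
        le_inf (inf_le_left.trans hcm₁) ((inf_le_inf_right _ inf_le_left).trans hcd)
    _ = ⊥ := compl_inf_eq_bot

theorem CancelsOutside.compl {a : B} (h : CancelsOutside x S a) : CancelsOutside x S aᶜ :=
  .of_compl hx hdense (by rwa [compl_compl])

theorem CancelsOutside.sSup {t : Set B} (ht : ∀ a ∈ t, CancelsOutside x S a) :
    CancelsOutside x S (sSup t) := by
  refine .of_compl hx hdense fun c hc d hd hd₀ hcd => ?_
  rw [compl_sSup] at hcd ⊢
  exact le_iInf₂ fun a ha =>
    (ht a ha).compl hx hdense c hc d hd hd₀ (hcd.trans (iInf₂_le a ha))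

theorem cancelsOutside_of_mem_cSubalgClosure {a : B} (ha : a ∈ cSubalgClosure (x '' S)) :
    CancelsOutside x S a :=
  cSubalgClosure_subset (S := {a | CancelsOutside x S a})
    (fun _ hb => hx.cancelsOutside_of_mem_closure (subset_closure hb))
    (fun _ ht => .sSup hx hdense ht) (fun _ hb => hb.compl hx hdense) ha

end CancelsOutside

theorem projection_of_free_part_general {n m : ℕ} (x : T → B) (hx : Indep x)
    (hdense : ∀ b : B, b ≠ ⊥ → ∃ c ∈ subalgClosure (Set.range x), c ≠ ⊥ ∧ c ≤ b)
    (S : Set T) (τ : Fin n → B) (hτ : ∀ ℓ, τ ℓ ∈ subalgClosure (x '' S))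
    (ν : Fin m → T) (hνS : ∀ ℓ, ν ℓ ∉ S)
    (σ : Fin m → B) (hσ : ∀ ℓ, σ ℓ = x (ν ℓ) ∨ σ ℓ = (x (ν ℓ))ᶜ)
    (hne : Finset.univ.inf τ ⊓ Finset.univ.inf σ ≠ ⊥) :
    prj (cSubalgClosure (x '' S)) (Finset.univ.inf τ ⊓ Finset.univ.inf σ) =
      Finset.univ.inf τ := by
  simp only [subalgClosure_eq_closure, SetLike.mem_coe] at hτ hdense
  have hτ₀ : Finset.univ.inf τ ∈ closure (x '' S) := finsetInf_mem _ _ fun ℓ _ => hτ ℓ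
  have hσ₀ : Finset.univ.inf σ ∈ closure (x '' Sᶜ) := by
    refine finsetInf_mem _ _ fun ℓ _ => ?_
    have hxν : x (ν ℓ) ∈ closure (x '' Sᶜ) := subset_closure ⟨ν ℓ, hνS ℓ, rfl⟩
    rcases hσ ℓ with h | h <;> rw [h]
    exacts [hxν, compl_mem hxν]
  refine le_antisymm (sInf_le ⟨closure_subset_cSubalgClosure hτ₀, inf_le_left⟩) (le_sInf ?_)
  rintro a ⟨ha, hle⟩
  exact cancelsOutside_of_mem_cSubalgClosure hx hdense ha _ hτ₀ _ hσ₀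
    (ne_bot_of_le_ne_bot hne inf_le_right) hle

/-- In (the completion of) the free Boolean algebra on generators `x : T → B`:
if `z = ⨅ ℓ τ_ℓ ⊓ ⨅ ℓ σ_ℓ ≠ ⊥`, where each `τ_ℓ` lies in the subalgebra generated by
`{x_η : η ∈ S}` and each `σ_ℓ ∈ {x_{ν_ℓ}, (x_{ν_ℓ})ᶜ}` with the `ν_ℓ ∈ T \ S` distinct,
then `pr_A(z) = ⨅ ℓ τ_ℓ`, where `A` is the complete subalgebra generated by
`{x_η : η ∈ S}`. -/
theorem projection_of_free_part {n m : ℕ} (x : T → B) (hx : Indep x)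
    (hdense : ∀ b : B, b ≠ ⊥ → ∃ c ∈ subalgClosure (Set.range x), c ≠ ⊥ ∧ c ≤ b)
    (S : Set T) (τ : Fin n → B) (hτ : ∀ ℓ, τ ℓ ∈ subalgClosure (x '' S))
    (ν : Fin m → T) (hνinj : Function.Injective ν) (hνS : ∀ ℓ, ν ℓ ∉ S)
    (σ : Fin m → B) (hσ : ∀ ℓ, σ ℓ = x (ν ℓ) ∨ σ ℓ = (x (ν ℓ))ᶜ)
    (hne : Finset.univ.inf τ ⊓ Finset.univ.inf σ ≠ ⊥) :
    prj (cSubalgClosure (x '' S)) (Finset.univ.inf τ ⊓ Finset.univ.inf σ) =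
      Finset.univ.inf τ :=
  projection_of_free_part_general x hx hdense S τ hτ ν hνS σ hσ hne
end

section
/- Let K₀, K₁ be disjoint ideals of a Boolean algebra B generating a maximal ideal K = {a₀ ∪ a₁ : a₀ ∈ K₀, a₁ ∈ K₁}, and suppose neither K₀ nor K₁ has a maximal element. If c ∈ B is disjoint from every member of K_{1−ℓ}, then c ∈ K_ℓ. -/
/-! If `cᶜ = a ⊔ b` with `a ∈ K_ℓ`, `b ∈ K_{1−ℓ}`, then any `e ∈ K_{1−ℓ}` is disjoint from `c` and
(as `K_ℓ ∩ K_{1−ℓ} = {⊥}`) from `a`, hence `e ≤ b`: so `b` would be maximal in `K_{1−ℓ}`.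
Maximality of `K` therefore writes `c` itself as `a ⊔ b`, and disjointness of `c` from `b` forces
`b = ⊥`, i.e. `c = a ∈ K_ℓ`. -/

variable {B : Type*} [BooleanAlgebra B]

def IsIdeal (K : Set B) : Prop :=
  ⊥ ∈ K ∧ (∀ a b : B, b ∈ K → a ≤ b → a ∈ K) ∧ (∀ a ∈ K, ∀ b ∈ K, a ⊔ b ∈ K)

open scoped SetFamily

theorem Set.mem_of_mem_sups_of_forall_disjoint {α : Type*} [Lattice α] [OrderBot α]
    {I J : Set α} {c : α} (hc : ∀ d ∈ J, Disjoint c d) (h : c ∈ I ⊻ J) : c ∈ I := by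
  obtain ⟨a, ha, b, hb, rfl⟩ := Set.mem_sups.1 h
  rwa [(hc b hb).eq_bot_of_ge le_sup_right, sup_bot_eq]

theorem Set.compl_notMem_sups_of_forall_disjoint {I J : Set B} {c : B}
    (hI : IsLowerSet I) (hJ : IsLowerSet J) (hIJ : ∀ z ∈ I, z ∈ J → z = ⊥)
    (hJmax : ∀ b ∈ J, ∃ e ∈ J, b < e) (hc : ∀ d ∈ J, Disjoint c d) : cᶜ ∉ I ⊻ J := by
  intro hcompl
  obtain ⟨a, ha, b, hb, hab⟩ := Set.mem_sups.1 hcompl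
  obtain ⟨e, he, hbe⟩ := hJmax b hb
  have he_le : e ≤ a ⊔ b := hab ▸ (hc e he).symm.le_compl_right
  have hea : Disjoint e a := disjoint_iff.2 (hIJ _ (hI inf_le_right ha) (hJ inf_le_left he))
  exact hbe.not_ge (hea.left_le_of_le_sup_left he_le)

theorem Set.mem_of_forall_disjoint_of_sups {I J : Set B} {c : B}
    (hI : IsLowerSet I) (hJ : IsLowerSet J) (hIJ : ∀ z ∈ I, z ∈ J → z = ⊥)
    (hJmax : ∀ b ∈ J, ∃ e ∈ J, b < e) (hsplit : c ∈ I ⊻ J ∨ cᶜ ∈ I ⊻ J)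
    (hc : ∀ d ∈ J, Disjoint c d) : c ∈ I :=
  mem_of_mem_sups_of_forall_disjoint hc
    (hsplit.resolve_right (compl_notMem_sups_of_forall_disjoint hI hJ hIJ hJmax hc))

theorem IsIdeal.isLowerSet {K : Set B} (hK : IsIdeal K) : IsLowerSet K :=
  fun _ _ hba ha => hK.2.1 _ _ ha hba

theorem mem_of_disjoint_from_other_ideal_general (K : Bool → Set B)
    (hK : ∀ ℓ, IsIdeal (K ℓ))
    (hdisj : ∀ z : B, z ∈ K true → z ∈ K false → z = ⊥)
    (hnomax : ∀ ℓ, ∀ a ∈ K ℓ, ∃ b ∈ K ℓ, a < b)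
    (hmax : ∀ z : B, (∃ a ∈ K false, ∃ b ∈ K true, z = a ⊔ b) ∨
      (∃ a ∈ K false, ∃ b ∈ K true, zᶜ = a ⊔ b))
    (ℓ : Bool) (c : B) (hc : ∀ d ∈ K (!ℓ), c ⊓ d = ⊥) :
    c ∈ K ℓ := by
  have hsplit : c ∈ K false ⊻ K true ∨ cᶜ ∈ K false ⊻ K true := by
    simpa only [Set.mem_sups, eq_comm] using hmax c
  have hc' : ∀ d ∈ K (!ℓ), Disjoint c d := fun d hd => disjoint_iff.2 (hc d hd)
  cases ℓ with
  | false =>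
    exact Set.mem_of_forall_disjoint_of_sups (hK false).isLowerSet (hK true).isLowerSet
      (fun z h₀ h₁ => hdisj z h₁ h₀) (hnomax true) hsplit hc'
  | true =>
    rw [Set.sups_comm] at hsplit
    exact Set.mem_of_forall_disjoint_of_sups (hK true).isLowerSet (hK false).isLowerSet
      hdisj (hnomax false) hsplit hc'

/-- If `K₀, K₁` are disjoint ideals with no maximal elements generating a proper maximal
ideal `K = {a₀ ⊔ a₁}`, and `c` is disjoint from every member of `K_{1−ℓ}`, then `c ∈ K_ℓ`. -/
theorem mem_of_disjoint_from_other_ideal (K : Bool → Set B)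
    (hK : ∀ ℓ, IsIdeal (K ℓ))
    (hdisj : ∀ z : B, z ∈ K true → z ∈ K false → z = ⊥)
    (hnomax : ∀ ℓ, ∀ a ∈ K ℓ, ∃ b ∈ K ℓ, a < b)
    (hproper : ¬ ∃ a ∈ K false, ∃ b ∈ K true, a ⊔ b = ⊤)
    (hmax : ∀ z : B, (∃ a ∈ K false, ∃ b ∈ K true, z = a ⊔ b) ∨
      (∃ a ∈ K false, ∃ b ∈ K true, zᶜ = a ⊔ b))
    (ℓ : Bool) (c : B) (hc : ∀ d ∈ K (!ℓ), c ⊓ d = ⊥) :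
    c ∈ K ℓ :=
  mem_of_disjoint_from_other_ideal_general K hK hdisj hnomax hmax ℓ c hc
end
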